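/- Let μ and λ be nonincreasing K-tuples of nonnegative real numbers. If Σᵢ μᵢ^α = Σᵢ λᵢ^α for all α in a subset A ⊂ [1,∞) possessing a limit point, then μ = λ. -/

import Mathlib

/-!
Each map `α ↦ x ^ α` with `x ≥ 0` is real-analytic on `α > 0` (it is `exp (α log x)`, or
identically `0`), so by the identity theorem the two power sums agree for every `α > 0`, in
particular at every natural exponent. The characters `n ↦ r ^ n` of `ℕ` for distinct `r` are
linearly independent (Dedekind–Artin), so the power sums at natural exponents determine the
multiset of entries, and a multiset has only one nonincreasing enumeration.
-/

open Finset Filter Set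

theorem LinearIndependent.multiset_eq_of_sum_map_eq {ι M : Type*} [AddCommMonoid M] {v : ι → M}
    (hv : LinearIndependent ℕ v) {s t : Multiset ι} (h : (s.map v).sum = (t.map v).sum) :
    s = t := by
  classical
  have sum_eq : ∀ u : Multiset ι,
      (u.map v).sum = Finsupp.linearCombination ℕ v (Multiset.toFinsupp u) := by
    intro u
    conv_lhs => rw [← Multiset.toFinsupp_toMultiset u]
    rw [Finsupp.toMultiset_map, Finsupp.sum_toMultiset, Finsupp.linearCombination_apply,
      Finsupp.sum_mapDomain_index (h := fun a n => n • a) (fun _ => zero_nsmul _)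
        (fun _ _ _ => add_nsmul _ _ _)]
  rw [sum_eq, sum_eq] at h
  exact Multiset.toFinsupp.injective (hv h)

theorem Multiset.eq_of_sum_map_pow_eq {R : Type*} [CommRing R] [IsDomain R] [CharZero R]
    {s t : Multiset R} (h : ∀ n : ℕ, (s.map (· ^ n)).sum = (t.map (· ^ n)).sum) : s = t := by
  have hv : LinearIndependent R (fun r : R => ⇑(powersHom R r)) :=
    (linearIndependent_monoidHom (Multiplicative ℕ) R).comp _ (powersHom R).injective
  refine (hv.restrict_scalars' ℕ).multiset_eq_of_sum_map_eq ?_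
  ext n
  simpa [Pi.multiset_sum_apply, Multiset.map_map, Function.comp_def] using h n.toAdd

theorem analyticOnNhd_const_rpow {x : ℝ} (hx : 0 ≤ x) :
    AnalyticOnNhd ℝ (fun α : ℝ => x ^ α) (Ioi 0) := by
  intro α hα
  rcases hx.eq_or_lt with rfl | hx
  · refine (analyticAt_const (v := (0 : ℝ))).congr ?_
    filter_upwards [Ioi_mem_nhds hα] with β hβ
    exact (Real.zero_rpow hβ.ne').symm
  · simp_rw [Real.rpow_def_of_pos hx]
    exact (analyticAt_const.mul analyticAt_id).rexp'

theorem AnalyticOnNhd.eqOn_of_accPt {𝕜 E : Type*} [NontriviallyNormedField 𝕜]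
    [NormedAddCommGroup E] [NormedSpace 𝕜 E] {f g : 𝕜 → E} {U A : Set 𝕜} {x : 𝕜}
    (hf : AnalyticOnNhd 𝕜 f U) (hg : AnalyticOnNhd 𝕜 g U) (hU : IsPreconnected U)
    (hxU : x ∈ U) (hx : AccPt x (𝓟 A)) (hfg : EqOn f g A) : EqOn f g U := by
  refine hf.eqOn_of_preconnected_of_frequently_eq hg hU hxU ?_
  rw [accPt_iff_frequently] at hx
  rw [frequently_nhdsWithin_iff]
  exact hx.mono fun y hy => ⟨hfg hy.2, hy.1⟩

theorem Antitone.eq_of_multiset_map_eq {α : Type*} [PartialOrder α] {n : ℕ} {f g : Fin n → α}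
    (hf : Antitone f) (hg : Antitone g) (h : univ.val.map f = univ.val.map g) : f = g := by
  rw [Fin.univ_val_map, Fin.univ_val_map, Multiset.coe_eq_coe] at h
  exact List.ofFn_injective (h.eq_of_pairwise' hf.sortedGE_ofFn.pairwise hg.sortedGE_ofFn.pairwise)

/-- If μ and λ are nonincreasing K-tuples of nonnegative reals with
Σ μᵢ^α = Σ λᵢ^α for all α in a subset A of [1,∞) possessing a limit point, then μ = λ. -/
theorem eq_of_phi_alpha_eq (K : ℕ) (μ lam : Fin K → ℝ)
    (hμa : Antitone μ) (hlama : Antitone lam)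
    (hμ0 : ∀ i, 0 ≤ μ i) (hlam0 : ∀ i, 0 ≤ lam i)
    (A : Set ℝ) (hA : A ⊆ Set.Ici 1)
    (hacc : ∃ x : ℝ, AccPt x (Filter.principal A))
    (heq : ∀ α ∈ A, ∑ i, μ i ^ α = ∑ i, lam i ^ α) :
    μ = lam := by
  obtain ⟨x, hx⟩ := hacc
  have hx_pos : 0 < x :=
    one_pos.trans_le (closure_minimal hA isClosed_Ici (mem_closure_iff_clusterPt.2 hx.clusterPt))
  have analytic (ν : Fin K → ℝ) (hν : ∀ i, 0 ≤ ν i) :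
      AnalyticOnNhd ℝ (fun α : ℝ => ∑ i, ν i ^ α) (Ioi 0) :=
    Finset.analyticOnNhd_fun_sum _ fun i _ => analyticOnNhd_const_rpow (hν i)
  have eq_pos : EqOn (fun α : ℝ => ∑ i, μ i ^ α) (fun α => ∑ i, lam i ^ α) (Ioi 0) :=
    (analytic μ hμ0).eqOn_of_accPt (analytic lam hlam0) isPreconnected_Ioi hx_pos hx heq
  have eq_nat : ∀ n : ℕ, ∑ i, μ i ^ n = ∑ i, lam i ^ n := by
    rintro (_ | n)
    · simp only [pow_zero]
    · simpa only [Real.rpow_natCast] using eq_pos (x := (n + 1 : ℕ)) (mem_Ioi.2 (by positivity))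
  refine hμa.eq_of_multiset_map_eq hlama (Multiset.eq_of_sum_map_pow_eq fun n => ?_)
  simpa only [Multiset.map_map, Function.comp_def, ← Finset.sum_eq_multiset_sum] using eq_nat n
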